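/- Adding a nondominated point strictly decreases R2: if Y ⊆ (0,∞)² is finite nonempty and z ∈ (0,∞)² satisfies that no y ∈ Y has y₁ ≤ z₁ and y₂ ≤ z₂ (z is not weakly dominated), then R2(Y ∪ {z}) < R2(Y). -/

import Mathlib

/-!
At the weight `w₀ = z₂ / (z₁ + z₂)` the two weighted objectives of `z` coincide, and any point
`y` that does not weakly dominate `z` beats `z` in one coordinate, so its Tchebycheff utility at
`w₀` is strictly larger than that of `z`. Hence adding `z` lowers the (continuous) integrand
strictly at `w₀` and never raises it, so the integral drops strictly.
-/

open Set

section FiniteInfima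

variable {ι α : Type*} [ConditionallyCompleteLinearOrder α]

theorem continuous_ciInf_of_finite [TopologicalSpace α] [OrderClosedTopology α] {X : Type*}
    [TopologicalSpace X] [Finite ι] {f : ι → X → α} (hf : ∀ i, Continuous (f i)) :
    Continuous fun x => ⨅ i, f i x := by
  cases isEmpty_or_nonempty ι
  · simp only [iInf, range_eq_empty]
    exact continuous_const
  · have := Fintype.ofFinite ι
    simp_rw [← Finset.inf'_univ_eq_ciInf]
    exact Continuous.finset_inf'_apply _ fun i _ => hf i

variable {s : Set ι} [Finite s] [Nonempty s] {f : ι → α}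

theorem ciInf_insert_le_ciInf (a : ι) : ⨅ y : (insert a s : Set ι), f y ≤ ⨅ y : s, f y :=
  le_ciInf fun y =>
    ciInf_le (Finite.bddBelow_range _) (⟨y, mem_insert_of_mem a y.2⟩ : (insert a s : Set ι))

theorem ciInf_insert_lt_ciInf {a : ι} (h : ∀ y ∈ s, f a < f y) :
    ⨅ y : (insert a s : Set ι), f y < ⨅ y : s, f y := by
  obtain ⟨y, hy⟩ := exists_eq_ciInf_of_finite (f := fun y : s => f y)
  calc ⨅ y : (insert a s : Set ι), f y ≤ f a :=
        ciInf_le (Finite.bddBelow_range _) (⟨a, mem_insert a s⟩ : (insert a s : Set ι))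
    _ < ⨅ y : s, f y := hy ▸ h y y.2

end FiniteInfima

def tchebycheff (w : ℝ) (y : ℝ × ℝ) : ℝ := max (w * y.1) ((1 - w) * y.2)

theorem continuous_tchebycheff (y : ℝ × ℝ) : Continuous fun w => tchebycheff w y := by
  unfold tchebycheff
  fun_prop

noncomputable def balancedWeight (z : ℝ × ℝ) : ℝ := z.2 / (z.1 + z.2)

variable {z : ℝ × ℝ}

theorem balancedWeight_mem_Ioo (hz : 0 < z.1 ∧ 0 < z.2) : balancedWeight z ∈ Ioo 0 1 :=
  ⟨div_pos hz.2 (add_pos hz.1 hz.2), (div_lt_one (add_pos hz.1 hz.2)).2 (by linarith)⟩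

theorem balancedWeight_mul_fst (hz : 0 < z.1 ∧ 0 < z.2) :
    balancedWeight z * z.1 = (1 - balancedWeight z) * z.2 := by
  have : z.1 + z.2 ≠ 0 := (add_pos hz.1 hz.2).ne'
  unfold balancedWeight
  field_simp
  ring

theorem tchebycheff_balancedWeight (hz : 0 < z.1 ∧ 0 < z.2) :
    tchebycheff (balancedWeight z) z = balancedWeight z * z.1 := by
  rw [tchebycheff, ← balancedWeight_mul_fst hz, max_self]

theorem tchebycheff_balancedWeight_lt {y : ℝ × ℝ} (hz : 0 < z.1 ∧ 0 < z.2)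
    (hy : ¬ (y.1 ≤ z.1 ∧ y.2 ≤ z.2)) :
    tchebycheff (balancedWeight z) z < tchebycheff (balancedWeight z) y := by
  obtain ⟨hw₀, hw₁⟩ := balancedWeight_mem_Ioo hz
  rw [tchebycheff_balancedWeight hz, tchebycheff, lt_max_iff]
  rcases not_and_or.1 hy with h | h
  · exact Or.inl (mul_lt_mul_of_pos_left (not_le.1 h) hw₀)
  · rw [balancedWeight_mul_fst hz]
    exact Or.inr (mul_lt_mul_of_pos_left (not_le.1 h) (sub_pos.2 hw₁))

theorem r2_strict_decrease_nondominated_general (Y : Set (ℝ × ℝ)) (hfin : Y.Finite)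
    (hne : Y.Nonempty)
    (z : ℝ × ℝ) (hz : 0 < z.1 ∧ 0 < z.2)
    (hnondom : ∀ y ∈ Y, ¬ (y.1 ≤ z.1 ∧ y.2 ≤ z.2)) :
    (∫ w in (0:ℝ)..1, ⨅ y : (insert z Y : Set (ℝ × ℝ)),
        max (w * (y : ℝ × ℝ).1) ((1 - w) * (y : ℝ × ℝ).2)) <
    (∫ w in (0:ℝ)..1, ⨅ y : Y, max (w * (y : ℝ × ℝ).1) ((1 - w) * (y : ℝ × ℝ).2)) := by
  have := hfin.to_subtype
  have := hne.to_subtype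
  change (∫ w in (0:ℝ)..1, ⨅ y : (insert z Y : Set (ℝ × ℝ)), tchebycheff w y) <
    ∫ w in (0:ℝ)..1, ⨅ y : Y, tchebycheff w y
  refine intervalIntegral.integral_lt_integral_of_continuousOn_of_le_of_exists_lt zero_lt_one
    (continuous_ciInf_of_finite (ι := (insert z Y : Set (ℝ × ℝ)))
      fun y => continuous_tchebycheff y).continuousOn
    (continuous_ciInf_of_finite (ι := Y) fun y => continuous_tchebycheff y).continuousOn
    (fun w _ => ciInf_insert_le_ciInf z) ⟨balancedWeight z, ?_, ?_⟩
  · exact Ioo_subset_Icc_self (balancedWeight_mem_Ioo hz)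
  · exact ciInf_insert_lt_ciInf fun y hy => tchebycheff_balancedWeight_lt hz (hnondom y hy)

theorem r2_strict_decrease_nondominated (Y : Set (ℝ × ℝ)) (hfin : Y.Finite)
    (hne : Y.Nonempty) (hpos : ∀ y ∈ Y, 0 < y.1 ∧ 0 < y.2)
    (z : ℝ × ℝ) (hz : 0 < z.1 ∧ 0 < z.2)
    (hnondom : ∀ y ∈ Y, ¬ (y.1 ≤ z.1 ∧ y.2 ≤ z.2)) :
    (∫ w in (0:ℝ)..1, ⨅ y : (insert z Y : Set (ℝ × ℝ)),
        max (w * (y : ℝ × ℝ).1) ((1 - w) * (y : ℝ × ℝ).2)) <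
    (∫ w in (0:ℝ)..1, ⨅ y : Y, max (w * (y : ℝ × ℝ).1) ((1 - w) * (y : ℝ × ℝ).2)) :=
  r2_strict_decrease_nondominated_general Y hfin hne z hz hnondom
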